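/- Let g₁, g₂ : [0,∞) → (0,∞) be left-continuous with g₁(s) ≤ g₂(s) for all s, and let Γ₁, Γ₂ solve Γᵢ(t) = ∫₀ᵗ gᵢ(Γᵢ(s)) ds. Assume both solutions exist and are finite on [0,T]. Then Γ₁(t) ≤ Γ₂(t) for all t ∈ [0,T]. -/

import Mathlib

/-!
Each `Γᵢ` is continuous, strictly increasing and has left derivative `gᵢ (Γᵢ t)`, so its inverse
`τᵢ` (the time at which `Γᵢ` reaches level `x`) has left derivative `1 / gᵢ x`. As
`1 / g₁ ≥ 1 / g₂` and `τ₁ 0 = τ₂ 0 = 0`, the fencing theorem gives `τ₂ ≤ τ₁`: `Γ₁` reaches every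
level no earlier than `Γ₂`, i.e. `Γ₁ ≤ Γ₂`. Passing to the inverses is what makes left continuity
of `gᵢ`, with no Lipschitz bound, enough.
-/

open MeasureTheory intervalIntegral Set Filter Topology

section Primitive

variable {f Γ : ℝ → ℝ} {a b : ℝ}

theorem strictMonoOn_of_eqOn_integral (hf : IntervalIntegrable f volume a b)
    (hpos : ∀ s ∈ Icc a b, 0 < f s) (hΓ : EqOn Γ (fun t => ∫ s in a..t, f s) (Icc a b)) :
    StrictMonoOn Γ (Icc a b) := by
  intro s hs t ht hst
  have hint : ∀ u ∈ Icc a b, IntervalIntegrable f volume a u := fun u hu =>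
    hf.mono_set (uIcc_subset_uIcc_left (mem_uIcc_of_le hu.1 hu.2))
  have hdiff : Γ t - Γ s = ∫ u in s..t, f u := by
    rw [hΓ ht, hΓ hs]
    exact integral_interval_sub_left (hint t ht) (hint s hs)
  have hpos' : 0 < ∫ u in s..t, f u :=
    intervalIntegral_pos_of_pos_on ((hint s hs).symm.trans (hint t ht))
      (fun u hu => hpos u ⟨hs.1.trans hu.1.le, hu.2.le.trans ht.2⟩) hst
  linarith

theorem continuousOn_of_eqOn_integral (hab : a ≤ b) (hf : IntervalIntegrable f volume a b)
    (hΓ : EqOn Γ (fun t => ∫ s in a..t, f s) (Icc a b)) : ContinuousOn Γ (Icc a b) := by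
  have := continuousOn_primitive_interval' hf left_mem_uIcc
  rw [uIcc_of_le hab] at this
  exact this.congr hΓ

theorem hasDerivWithinAt_Iic_of_eqOn_integral (hf : IntervalIntegrable f volume a b)
    (hΓ : EqOn Γ (fun t => ∫ s in a..t, f s) (Icc a b)) {t : ℝ} (ht : t ∈ Ioc a b)
    (hft : ContinuousWithinAt f (Iic t) t) : HasDerivWithinAt Γ (f t) (Iic t) t := by
  have hmem : Icc a t ∈ 𝓝[≤] t := Icc_mem_nhdsLE ht.1
  have hint : IntervalIntegrable f volume a t :=
    hf.mono_set (uIcc_subset_uIcc_left (mem_uIcc_of_le ht.1.le ht.2))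
  have hmeas : StronglyMeasurableAtFilter f (𝓝[≤] t) volume :=
    ⟨Icc a t, hmem,
      (intervalIntegrable_iff_integrableOn_Icc_of_le ht.1.le |>.1 hint).aestronglyMeasurable⟩
  refine (integral_hasDerivWithinAt_right hint hmeas hft).congr_of_eventuallyEq ?_
    (hΓ ⟨ht.1.le, ht.2⟩)
  filter_upwards [hmem] with u hu using hΓ ⟨hu.1, hu.2.trans ht.2⟩

end Primitive

theorem continuousWithinAt_Iic_comp_of_monotoneOn {g Γ : ℝ → ℝ} {a t : ℝ} (hat : a < t)
    (hg : ContinuousWithinAt g (Iic (Γ t)) (Γ t)) (hmono : MonotoneOn Γ (Icc a t))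
    (hΓ : ContinuousWithinAt Γ (Icc a t) t) :
    ContinuousWithinAt (fun s => g (Γ s)) (Iic t) t :=
  (hg.comp hΓ fun _ hs => hmono hs (right_mem_Icc.2 hat.le) hs.2).mono_of_mem_nhdsWithin
    (Icc_mem_nhdsLE hat)

theorem le_of_hasDerivWithinAt_Iic_nonneg {φ φ' : ℝ → ℝ} {a b : ℝ}
    (hab : a ≤ b) (hφ : ContinuousOn φ (Icc a b))
    (hderiv : ∀ x ∈ Ioc a b, HasDerivWithinAt φ (φ' x) (Iic x) x)
    (hnonneg : ∀ x ∈ Ioc a b, 0 ≤ φ' x) : φ a ≤ φ b := by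
  have hrefl : ContinuousOn (fun y => φ (-y)) (Icc (-b) (-a)) :=
    hφ.comp continuous_neg.continuousOn fun y hy => ⟨by linarith [hy.2], by linarith [hy.1]⟩
  have hrefl' : ∀ y ∈ Ico (-b) (-a), HasDerivWithinAt (fun y => φ (-y)) (-φ' (-y)) (Ici y) y := by
    intro y hy
    have := (hderiv (-y) ⟨by linarith [hy.2], by linarith [hy.1]⟩).scomp y
      (hasDerivWithinAt_neg y (Ici y)) fun z hz => by simpa using hz
    rwa [neg_one_smul] at this
  have := image_le_of_deriv_right_le_deriv_boundary hrefl hrefl' (le_refl (φ (- -b)))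
    continuousOn_const (fun y _ => hasDerivWithinAt_const y _ _)
    (fun y hy => neg_nonpos.2 (hnonneg (-y) ⟨by linarith [hy.2], by linarith [hy.1]⟩))
    (right_mem_Icc.2 (neg_le_neg hab))
  simpa using this

theorem HasDerivWithinAt.of_local_left_inverse {f τ : ℝ → ℝ} {f' x : ℝ} {s t : Set ℝ}
    (hτ : Tendsto τ (𝓝[s] x) (𝓝[t] (τ x))) (hf : HasDerivWithinAt f f' t (τ x)) (hf' : f' ≠ 0)
    (hx : x ∈ s) (hfτ : ∀ᶠ y in 𝓝[s] x, f (τ y) = y) :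
    HasDerivWithinAt τ f'⁻¹ s x :=
  HasFDerivWithinAt.of_local_left_inverse
    (f' := ContinuousLinearEquiv.unitsEquivAut ℝ (Units.mk0 f' hf')) hτ hf hx hfτ

theorem Monotone.hasDerivWithinAt_Iic_of_local_left_inverse {f τ : ℝ → ℝ} {f' c x : ℝ}
    (hmono : Monotone τ) (hcont : ContinuousAt τ x) (hf : HasDerivWithinAt f f' (Iic (τ x)) (τ x))
    (hf' : f' ≠ 0) (hcx : c < x) (hfτ : ∀ y ∈ Ioc c x, f (τ y) = y) :
    HasDerivWithinAt τ f'⁻¹ (Iic x) x := by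
  have hτ : Tendsto τ (𝓝[≤] x) (𝓝[≤] (τ x)) :=
    tendsto_nhdsWithin_iff.2 ⟨hcont.continuousWithinAt.tendsto,
      eventually_nhdsWithin_of_forall fun y (hy : y ≤ x) => hmono hy⟩
  exact hf.of_local_left_inverse hτ hf' self_mem_Iic (eventually_of_mem (Ioc_mem_nhdsLE hcx) hfτ)

theorem StrictMonoOn.exists_monotone_continuous_inverse {Γ : ℝ → ℝ} {a b : ℝ} (hab : a ≤ b)
    (hmono : StrictMonoOn Γ (Icc a b)) (hcont : ContinuousOn Γ (Icc a b)) :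
    ∃ τ : ℝ → ℝ, Monotone τ ∧ Continuous τ ∧ (∀ x, τ x ∈ Icc a b) ∧
      (∀ t ∈ Icc a b, τ (Γ t) = t) ∧ ∀ x ∈ Icc (Γ a) (Γ b), Γ (τ x) = x := by
  have hmaps : MapsTo Γ (Icc a b) (Icc (Γ a) (Γ b)) := fun t ht =>
    ⟨hmono.monotoneOn (left_mem_Icc.2 hab) ht ht.1, hmono.monotoneOn ht (right_mem_Icc.2 hab) ht.2⟩
  let e : Icc a b ≃o Icc (Γ a) (Γ b) :=
    StrictMono.orderIsoOfSurjective (hmaps.restrict Γ _ _) (fun s t hst => hmono s.2 t.2 hst)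
      (hmaps.restrict_surjective_iff.2 (intermediate_value_Icc hab hcont))
  have hΓab : Γ a ≤ Γ b := hmono.monotoneOn (left_mem_Icc.2 hab) (right_mem_Icc.2 hab) hab
  refine ⟨IccExtend hΓab (Subtype.val ∘ e.symm),
    (Subtype.mono_coe _).comp e.symm.monotone |>.IccExtend _,
    (continuous_subtype_val.comp e.symm.continuous).Icc_extend', fun x => (e.symm _).2,
    fun t ht => ?_, fun x hx => ?_⟩
  · rw [IccExtend_of_mem _ _ (hmaps ht)]
    exact congrArg Subtype.val (e.symm_apply_apply ⟨t, ht⟩)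
  · rw [IccExtend_of_mem _ _ hx]
    exact congrArg Subtype.val (e.apply_symm_apply ⟨x, hx⟩)

theorem StrictMonoOn.exists_inverse_hasDerivWithinAt_Iic {Γ g : ℝ → ℝ} {a b : ℝ} (hab : a ≤ b)
    (hmono : StrictMonoOn Γ (Icc a b)) (hcont : ContinuousOn Γ (Icc a b))
    (hderiv : ∀ t ∈ Ioc a b, HasDerivWithinAt Γ (g (Γ t)) (Iic t) t)
    (hg : ∀ x ∈ Ioc (Γ a) (Γ b), g x ≠ 0) :
    ∃ τ : ℝ → ℝ, Continuous τ ∧ (∀ x, τ x ∈ Icc a b) ∧ (∀ t ∈ Icc a b, τ (Γ t) = t) ∧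
      (∀ x ∈ Icc (Γ a) (Γ b), Γ (τ x) = x) ∧
      ∀ x ∈ Ioc (Γ a) (Γ b), HasDerivWithinAt τ (g x)⁻¹ (Iic x) x := by
  obtain ⟨τ, hτmono, hτcont, hτmem, hτΓ, hΓτ⟩ :=
    hmono.exists_monotone_continuous_inverse hab hcont
  refine ⟨τ, hτcont, hτmem, hτΓ, hΓτ, fun x hx => ?_⟩
  have hx' : x ∈ Icc (Γ a) (Γ b) := Ioc_subset_Icc_self hx
  have hτx : τ x ∈ Ioc a b := by
    refine ⟨(hτmem x).1.lt_of_ne fun h => ?_, (hτmem x).2⟩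
    have := hΓτ x hx'
    rw [← h] at this
    exact hx.1.ne this
  have hΓx := hderiv (τ x) hτx
  rw [hΓτ x hx'] at hΓx
  exact hτmono.hasDerivWithinAt_Iic_of_local_left_inverse hτcont.continuousAt hΓx (hg x hx) hx.1
    fun y hy => hΓτ y ⟨hy.1.le, hy.2.trans hx.2⟩

theorem le_of_hasDerivWithinAt_Iic_of_rate_le {Γ₁ Γ₂ g₁ g₂ : ℝ → ℝ} {a b : ℝ} (hab : a ≤ b)
    (h₀ : Γ₁ a = Γ₂ a)
    (hmono₁ : StrictMonoOn Γ₁ (Icc a b)) (hmono₂ : StrictMonoOn Γ₂ (Icc a b))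
    (hcont₁ : ContinuousOn Γ₁ (Icc a b)) (hcont₂ : ContinuousOn Γ₂ (Icc a b))
    (hderiv₁ : ∀ t ∈ Ioc a b, HasDerivWithinAt Γ₁ (g₁ (Γ₁ t)) (Iic t) t)
    (hderiv₂ : ∀ t ∈ Ioc a b, HasDerivWithinAt Γ₂ (g₂ (Γ₂ t)) (Iic t) t)
    (hpos : ∀ x, Γ₁ a < x → 0 < g₁ x) (hle : ∀ x, Γ₁ a < x → g₁ x ≤ g₂ x) :
    ∀ t ∈ Icc a b, Γ₁ t ≤ Γ₂ t := by
  obtain ⟨τ₁, hτ₁cont, hτ₁mem, hτ₁Γ₁, hΓ₁τ₁, hτ₁deriv⟩ :=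
    hmono₁.exists_inverse_hasDerivWithinAt_Iic hab hcont₁ hderiv₁ fun x hx => (hpos x hx.1).ne'
  obtain ⟨τ₂, hτ₂cont, -, hτ₂Γ₂, -, hτ₂deriv⟩ :=
    hmono₂.exists_inverse_hasDerivWithinAt_Iic hab hcont₂ hderiv₂
      fun x hx => ((hpos x (h₀ ▸ hx.1)).trans_le (hle x (h₀ ▸ hx.1))).ne'
  have ha : a ∈ Icc a b := left_mem_Icc.2 hab
  have hb : b ∈ Icc a b := right_mem_Icc.2 hab
  have hτ_le : ∀ x ∈ Icc (Γ₁ a) (min (Γ₁ b) (Γ₂ b)), τ₂ x ≤ τ₁ x := by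
    intro x hx
    have h₁ : Ioc (Γ₁ a) x ⊆ Ioc (Γ₁ a) (Γ₁ b) :=
      Ioc_subset_Ioc_right (hx.2.trans (min_le_left _ _))
    have h₂ : Ioc (Γ₁ a) x ⊆ Ioc (Γ₂ a) (Γ₂ b) :=
      h₀ ▸ Ioc_subset_Ioc_right (hx.2.trans (min_le_right _ _))
    have := le_of_hasDerivWithinAt_Iic_nonneg hx.1 (hτ₁cont.sub hτ₂cont).continuousOn
      (fun y hy => (hτ₁deriv y (h₁ hy)).sub (hτ₂deriv y (h₂ hy)))
      (fun y hy => sub_nonneg.2 (inv_anti₀ (hpos y hy.1) (hle y hy.1)))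
    rw [Pi.sub_apply, Pi.sub_apply, hτ₁Γ₁ a ha, h₀, hτ₂Γ₂ a ha, sub_self] at this
    exact sub_nonneg.1 this
  intro t ht
  refine (le_total (Γ₁ t) (Γ₂ t)).elim id fun h => ?_
  have hx : Γ₂ t ∈ Icc (Γ₁ a) (min (Γ₁ b) (Γ₂ b)) :=
    ⟨h₀ ▸ hmono₂.monotoneOn ha ht ht.1,
      le_min (h.trans (hmono₁.monotoneOn ht hb ht.2)) (hmono₂.monotoneOn ht hb ht.2)⟩
  have htτ : t ≤ τ₁ (Γ₂ t) := (hτ₂Γ₂ t ht).symm.trans_le (hτ_le _ hx)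
  calc Γ₁ t ≤ Γ₁ (τ₁ (Γ₂ t)) := hmono₁.monotoneOn ht (hτ₁mem _) htτ
    _ = Γ₂ t := hΓ₁τ₁ _ ⟨hx.1, hx.2.trans (min_le_left _ _)⟩

theorem timeChange_strictMonoOn_continuousOn_hasDerivWithinAt {g Γ : ℝ → ℝ} {a b : ℝ}
    (hab : a ≤ b) (hg_pos : ∀ s, 0 ≤ s → 0 < g s)
    (hg_left : ∀ s, 0 < s → ContinuousWithinAt g (Iic s) s) (hΓ_nonneg : ∀ t ∈ Icc a b, 0 ≤ Γ t)
    (hint : IntervalIntegrable (fun s => g (Γ s)) volume a b)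
    (hΓ : EqOn Γ (fun t => ∫ s in a..t, g (Γ s)) (Icc a b)) :
    StrictMonoOn Γ (Icc a b) ∧ ContinuousOn Γ (Icc a b) ∧
      ∀ t ∈ Ioc a b, HasDerivWithinAt Γ (g (Γ t)) (Iic t) t := by
  have hmono := strictMonoOn_of_eqOn_integral hint (fun s hs => hg_pos _ (hΓ_nonneg s hs)) hΓ
  have hcont := continuousOn_of_eqOn_integral hab hint hΓ
  refine ⟨hmono, hcont, fun t ht => hasDerivWithinAt_Iic_of_eqOn_integral hint hΓ ht ?_⟩
  have htab : t ∈ Icc a b := Ioc_subset_Icc_self ht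
  have hΓt : 0 < Γ t := by
    simpa [hΓ (left_mem_Icc.2 hab)] using hmono (left_mem_Icc.2 hab) htab ht.1
  exact continuousWithinAt_Iic_comp_of_monotoneOn ht.1 (hg_left _ hΓt)
    (hmono.monotoneOn.mono (Icc_subset_Icc_right ht.2))
    ((hcont _ htab).mono (Icc_subset_Icc_right ht.2))

/-- Comparison principle for the time-change equation: if `g₁ ≤ g₂` are strictly
positive left-continuous rate functions and `Γᵢ` solve `Γᵢ(t) = ∫₀ᵗ gᵢ(Γᵢ(s)) ds`
on `[0,T]`, then `Γ₁ ≤ Γ₂` on `[0,T]`. -/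
theorem stmt17 (g₁ g₂ Γ₁ Γ₂ : ℝ → ℝ) (T : ℝ) (hT : 0 ≤ T)
    (hg₁_pos : ∀ s, 0 ≤ s → 0 < g₁ s)
    (hg₂_pos : ∀ s, 0 ≤ s → 0 < g₂ s)
    (hg₁_left : ∀ s, 0 < s → ContinuousWithinAt g₁ (Set.Iic s) s)
    (hg₂_left : ∀ s, 0 < s → ContinuousWithinAt g₂ (Set.Iic s) s)
    (hle : ∀ s, 0 ≤ s → g₁ s ≤ g₂ s)
    (hΓ₁_nonneg : ∀ t ∈ Set.Icc 0 T, 0 ≤ Γ₁ t)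
    (hΓ₂_nonneg : ∀ t ∈ Set.Icc 0 T, 0 ≤ Γ₂ t)
    (hΓ₁_int : ∀ t ∈ Set.Icc 0 T, IntervalIntegrable (fun s => g₁ (Γ₁ s)) volume 0 t)
    (hΓ₂_int : ∀ t ∈ Set.Icc 0 T, IntervalIntegrable (fun s => g₂ (Γ₂ s)) volume 0 t)
    (hΓ₁ : ∀ t ∈ Set.Icc 0 T, Γ₁ t = ∫ s in (0:ℝ)..t, g₁ (Γ₁ s))
    (hΓ₂ : ∀ t ∈ Set.Icc 0 T, Γ₂ t = ∫ s in (0:ℝ)..t, g₂ (Γ₂ s)) :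
    ∀ t ∈ Set.Icc (0:ℝ) T, Γ₁ t ≤ Γ₂ t := by
  have hT' : T ∈ Icc 0 T := right_mem_Icc.2 hT
  obtain ⟨hmono₁, hcont₁, hderiv₁⟩ :=
    timeChange_strictMonoOn_continuousOn_hasDerivWithinAt hT hg₁_pos hg₁_left hΓ₁_nonneg
      (hΓ₁_int T hT') hΓ₁
  obtain ⟨hmono₂, hcont₂, hderiv₂⟩ :=
    timeChange_strictMonoOn_continuousOn_hasDerivWithinAt hT hg₂_pos hg₂_left hΓ₂_nonneg
      (hΓ₂_int T hT') hΓ₂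
  have hΓ₁0 : Γ₁ 0 = 0 := (hΓ₁ 0 (left_mem_Icc.2 hT)).trans integral_same
  have hΓ₂0 : Γ₂ 0 = 0 := (hΓ₂ 0 (left_mem_Icc.2 hT)).trans integral_same
  exact le_of_hasDerivWithinAt_Iic_of_rate_le hT (hΓ₁0.trans hΓ₂0.symm) hmono₁ hmono₂ hcont₁ hcont₂
    hderiv₁ hderiv₂ (fun x hx => hg₁_pos x (hΓ₁0 ▸ hx.le)) fun x hx => hle x (hΓ₁0 ▸ hx.le)
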